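/- Let H be a Hilbert space and let U, V, P be bounded operators on H with P an orthogonal projection, U and V contractions, and U∘V = P. Then V∘P is a partial isometry with (V∘P)*∘(V∘P) = P. -/

import Mathlib

/-!
Since `U ∘ V = P` and both factors are contractions, `‖P x‖ = ‖U (V (P x))‖ ≤ ‖V (P x)‖ ≤ ‖P x‖`,
so `V` is isometric on the range of `P`. Hence `V ∘ P` and `P` have the same norms pointwise, and
by polarization `(V ∘ P)* (V ∘ P) = P* P = P`; composing with `V ∘ P` on the left and using
`P ∘ P = P` gives the partial-isometry identity.
-/

open ContinuousLinearMap

namespace ContinuousLinearMap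

theorem norm_map_eq_of_apply_apply_eq {𝕜 E F : Type*} [NontriviallyNormedField 𝕜]
    [SeminormedAddCommGroup E] [SeminormedAddCommGroup F] [NormedSpace 𝕜 E] [NormedSpace 𝕜 F]
    {U : F →L[𝕜] E} {V : E →L[𝕜] F} (hU : ‖U‖ ≤ 1) (hV : ‖V‖ ≤ 1) {y : E}
    (hy : U (V y) = y) : ‖V y‖ = ‖y‖ := by
  refine le_antisymm (by simpa using V.le_of_opNorm_le hV y) ?_
  calc ‖y‖ = ‖U (V y)‖ := by rw [hy]
    _ ≤ ‖V y‖ := by simpa using U.le_of_opNorm_le hU (V y)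

theorem adjoint_comp_self_eq_of_norm_map_eq {𝕜 H K : Type*} [RCLike 𝕜]
    [NormedAddCommGroup H] [InnerProductSpace 𝕜 H] [CompleteSpace H]
    [NormedAddCommGroup K] [InnerProductSpace 𝕜 K] [CompleteSpace K]
    {u v : H →L[𝕜] K} (h : ∀ x, ‖u x‖ = ‖v x‖) : adjoint u ∘L u = adjoint v ∘L v := by
  ext x
  refine ext_inner_right 𝕜 fun y ↦ ?_
  rw [comp_apply, comp_apply, adjoint_inner_left, adjoint_inner_left,
    inner_eq_sum_norm_sq_div_four, inner_eq_sum_norm_sq_div_four]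
  simp only [← map_add, ← map_sub, ← map_smul, h]

end ContinuousLinearMap

/-- If `P` is an orthogonal projection, `U, V` are contractions with `U ∘ V = P`,
then `V ∘ P` is a partial isometry with `(V∘P)* ∘ (V∘P) = P`. -/
theorem contraction_comp_projection_partial_isometry
    {H : Type*} [NormedAddCommGroup H] [InnerProductSpace ℂ H] [CompleteSpace H]
    (U V P : H →L[ℂ] H)
    (hP1 : P ∘L P = P) (hP2 : ContinuousLinearMap.adjoint P = P)
    (hU : ‖U‖ ≤ 1) (hV : ‖V‖ ≤ 1)
    (hUV : U ∘L V = P) :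
    (V ∘L P) ∘L ContinuousLinearMap.adjoint (V ∘L P) ∘L (V ∘L P) = V ∘L P ∧
      ContinuousLinearMap.adjoint (V ∘L P) ∘L (V ∘L P) = P := by
  have hVP_norm : ∀ x, ‖(V ∘L P) x‖ = ‖P x‖ := fun x ↦
    norm_map_eq_of_apply_apply_eq hU hV <| by
      rw [← comp_apply U V, hUV]
      exact DFunLike.congr_fun hP1 x
  have hVP : adjoint (V ∘L P) ∘L (V ∘L P) = P := by
    rw [adjoint_comp_self_eq_of_norm_map_eq hVP_norm, hP2, hP1]
  refine ⟨?_, hVP⟩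
  rw [hVP, comp_assoc, hP1]
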